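/- arXiv:1905.13131 — 2 statements merged into one kernel-verified Lean document; each statement's English description precedes it below -/
import Mathlib

section
/- Define LB1 = (Σ_{i=1}^m (1/m) min_k d(x_i,y_k)^p)^(1/p) and LB2 = (Σ_{j=1}^n (1/n) min_k d(x_k,y_j)^p)^(1/p). Then max{LB1, LB2} ≤ d_W(X,Y). -/
open Finset

def IsTransportMatrix (m n : ℕ) (C : Fin m → Fin n → ℝ) : Prop :=
  (∀ i j, 0 ≤ C i j) ∧ (∀ i, ∑ j, C i j = 1 / (m : ℝ)) ∧ (∀ j, ∑ i, C i j = 1 / (n : ℝ))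

noncomputable def transportCost {E : Type*} [MetricSpace E] {m n : ℕ} (p : ℝ)
    (x : Fin m → E) (y : Fin n → E) (C : Fin m → Fin n → ℝ) : ℝ :=
  ∑ i, ∑ j, C i j * dist (x i) (y j) ^ p

noncomputable def wassersteinDist {E : Type*} [MetricSpace E] {m n : ℕ} (p : ℝ)
    (x : Fin m → E) (y : Fin n → E) : ℝ :=
  (sInf {c : ℝ | ∃ C, IsTransportMatrix m n C ∧ c = transportCost p x y C}) ^ (1 / p)

/-
Each point `x i` sends total mass `1/m`, and each unit of it costs at least
`min_k d(x i, y k)^p`; so every transport plan costs at least the first sum, and symmetrically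
(transposing the plan) at least the second. Passing to the infimum over plans and taking
`p`-th roots, which is monotone for `p > 0`, gives both bounds.
-/

namespace IsTransportMatrix

variable {m n : ℕ} {C : Fin m → Fin n → ℝ}

theorem uniform [NeZero m] [NeZero n] :
    IsTransportMatrix m n (fun _ _ => 1 / ((m : ℝ) * n)) := by
  have hm : (m : ℝ) ≠ 0 := Nat.cast_ne_zero.mpr (NeZero.ne m)
  have hn : (n : ℝ) ≠ 0 := Nat.cast_ne_zero.mpr (NeZero.ne n)
  refine ⟨fun _ _ => by positivity, fun _ => ?_, fun _ => ?_⟩ <;>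
  · simp only [sum_const, card_univ, Fintype.card_fin, nsmul_eq_mul]
    field_simp

theorem transpose (hC : IsTransportMatrix m n C) : IsTransportMatrix n m (fun j i => C i j) :=
  ⟨fun j i => hC.1 i j, hC.2.2, hC.2.1⟩

theorem sum_inf'_le_left [NeZero n] (hC : IsTransportMatrix m n C) (c : Fin m → Fin n → ℝ) :
    ∑ i, 1 / (m : ℝ) * univ.inf' univ_nonempty (c i) ≤ ∑ i, ∑ j, C i j * c i j := by
  refine sum_le_sum fun i _ => ?_
  calc 1 / (m : ℝ) * univ.inf' univ_nonempty (c i)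
      = ∑ j, C i j * univ.inf' univ_nonempty (c i) := by rw [← sum_mul, hC.2.1 i]
    _ ≤ ∑ j, C i j * c i j :=
      sum_le_sum fun j _ => mul_le_mul_of_nonneg_left (inf'_le _ (mem_univ j)) (hC.1 i j)

theorem sum_inf'_le_right [NeZero m] (hC : IsTransportMatrix m n C) (c : Fin m → Fin n → ℝ) :
    ∑ j, 1 / (n : ℝ) * univ.inf' univ_nonempty (fun k => c k j) ≤ ∑ i, ∑ j, C i j * c i j := by
  rw [sum_comm]
  exact hC.transpose.sum_inf'_le_left fun j i => c i j

end IsTransportMatrix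

theorem rpow_le_wassersteinDist {E : Type*} [MetricSpace E] {m n : ℕ} [NeZero m] [NeZero n]
    {p : ℝ} (hp : 0 ≤ p) (x : Fin m → E) (y : Fin n → E) {a : ℝ} (ha : 0 ≤ a)
    (h : ∀ C, IsTransportMatrix m n C → a ≤ transportCost p x y C) :
    a ^ (1 / p) ≤ wassersteinDist p x y := by
  refine Real.rpow_le_rpow ha ?_ (by positivity)
  refine le_csInf ⟨_, _, IsTransportMatrix.uniform, rfl⟩ ?_
  rintro _ ⟨C, hC, rfl⟩
  exact h C hC

theorem sum_inf'_nonneg {ι κ : Type*} [Fintype ι] [Fintype κ] [Nonempty κ] {w : ℝ}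
    (hw : 0 ≤ w) {c : ι → κ → ℝ} (hc : ∀ i k, 0 ≤ c i k) :
    0 ≤ ∑ i, w * univ.inf' univ_nonempty (c i) :=
  sum_nonneg fun i _ => mul_nonneg hw (le_inf' _ _ fun k _ => hc i k)

/-- With `LB1 = (Σ_i (1/m) min_k d(x_i,y_k)^p)^(1/p)` and
`LB2 = (Σ_j (1/n) min_k d(x_k,y_j)^p)^(1/p)`, `max {LB1, LB2} ≤ d_W(X,Y)`. -/
theorem max_lower_bounds_le_wasserstein {E : Type*} [MetricSpace E] {m n : ℕ}
    [NeZero m] [NeZero n] {p : ℝ} (hp : 1 ≤ p) (x : Fin m → E) (y : Fin n → E) :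
    max
      ((∑ i : Fin m, (1 / (m : ℝ)) * Finset.univ.inf' Finset.univ_nonempty
          (fun k : Fin n => dist (x i) (y k) ^ p)) ^ (1 / p))
      ((∑ j : Fin n, (1 / (n : ℝ)) * Finset.univ.inf' Finset.univ_nonempty
          (fun k : Fin m => dist (x k) (y j) ^ p)) ^ (1 / p))
      ≤ wassersteinDist p x y := by
  have hp0 : 0 ≤ p := zero_le_one.trans hp
  have hcost : ∀ i j, 0 ≤ dist (x i) (y j) ^ p := fun _ _ => Real.rpow_nonneg dist_nonneg p
  exact max_le
    (rpow_le_wassersteinDist hp0 x y (sum_inf'_nonneg (by positivity) hcost)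
      fun C hC => hC.sum_inf'_le_left _)
    (rpow_le_wassersteinDist hp0 x y (sum_inf'_nonneg (by positivity) fun j i => hcost i j)
      fun C hC => hC.sum_inf'_le_right _)
end

section
/- With the star-padding modification D_{i,0} = D_{0,0} = 0 for all i ≥ 0 and D_{0,j} = ∞ for j ≥ 1 (indices: i ranges over columns of the long sequence of length m, j over the short sequence of length n; here D_{i,j} = w(i,j) + min{D_{i,j-1}, D_{i-1,j}, D_{i-1,j-1}}), the quantity min_{1 ≤ i ≤ m} D_{i,n} equals the minimum over all start indices 1 ≤ i_s ≤ m of the ordinary DTW distance (with standard boundary conditions) between the short sequence and the subsequence of the long sequence beginning at i_s and ending at some i_e ≤ m, i.e. subsequential DTW computes min over subsequences [i_s, i_e] of DTW cost. -/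
open scoped ENNReal

/-- The ordinary DTW cost matrix with standard boundary conditions
(`D 0 0 = 0`, infinite boundary otherwise). -/
noncomputable def dtw (w : ℕ → ℕ → NNReal) : ℕ → ℕ → ℝ≥0∞
  | 0, 0 => 0
  | _ + 1, 0 => ⊤
  | 0, _ + 1 => ⊤
  | i + 1, j + 1 =>
      (w (i + 1) (j + 1) : ℝ≥0∞) +
        min (dtw w (i + 1) j) (min (dtw w i (j + 1)) (dtw w i j))
  termination_by i j => (i, j)

/-- The star-padded (subsequential) DTW cost matrix: `D i 0 = 0` for all `i`,
`D 0 j = ∞` for `j ≥ 1`; here the first index ranges over the long sequence. -/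
noncomputable def sdtw (w : ℕ → ℕ → NNReal) : ℕ → ℕ → ℝ≥0∞
  | _, 0 => 0
  | 0, _ + 1 => ⊤
  | i + 1, j + 1 =>
      (w (i + 1) (j + 1) : ℝ≥0∞) +
        min (sdtw w (i + 1) j) (min (sdtw w i (j + 1)) (sdtw w i j))
  termination_by i j => (i, j)

/-!
The star padding `D i 0 = 0` lets a warping path enter the matrix at any position of the long
sequence, so `sdtw w i (j + 1)` is the cheapest ordinary DTW alignment of the first `j + 1`
entries of the short sequence against a window `[s, i]` ending at `i`. This follows by induction
on `(i, j)`: addition and `min` commute with infima in `ℝ≥0∞`, so the DTW recursion passes through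
the infimum over `s`, and the window starting at `i + 1` is empty and costs `∞`. Minimising over
the end `i` as well only exchanges the order of the two infima.
-/

open Finset

lemma biInf_Icc_biInf_Icc_comm {ι α : Type*} [Preorder ι] [LocallyFiniteOrder ι]
    [CompleteLattice α] (a b : ι) (f : ι → ι → α) :
    ⨅ i ∈ Icc a b, ⨅ s ∈ Icc a i, f s i = ⨅ s ∈ Icc a b, ⨅ i ∈ Icc s b, f s i := by
  refine le_antisymm (le_iInf₂ fun s hs => le_iInf₂ fun i hi => ?_)
    (le_iInf₂ fun i hi => le_iInf₂ fun s hs => ?_)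
  · rw [mem_Icc] at hs hi
    exact iInf₂_le_of_le i (mem_Icc.2 ⟨hs.1.trans hi.1, hi.2⟩)
      (iInf₂_le s (mem_Icc.2 ⟨hs.1, hi.1⟩))
  · rw [mem_Icc] at hs hi
    exact iInf₂_le_of_le s (mem_Icc.2 ⟨hs.1, hs.2.trans hi.2⟩)
      (iInf₂_le i (mem_Icc.2 ⟨hs.2, hi.2⟩))

section DTW

variable (w : ℕ → ℕ → NNReal)

@[simp] lemma dtw_zero_succ (j : ℕ) : dtw w 0 (j + 1) = ⊤ := by rw [dtw]

lemma dtw_succ_succ (i j : ℕ) :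
    dtw w (i + 1) (j + 1) =
      w (i + 1) (j + 1) + min (dtw w (i + 1) j) (min (dtw w i (j + 1)) (dtw w i j)) := by
  rw [dtw]

lemma coe_le_dtw_succ_succ (i j : ℕ) : (w (i + 1) (j + 1) : ℝ≥0∞) ≤ dtw w (i + 1) (j + 1) := by
  rw [dtw_succ_succ]
  exact le_self_add

@[simp] lemma dtw_one_one : dtw w 1 1 = w 1 1 := by
  simp [dtw_succ_succ, dtw]

@[simp] lemma sdtw_zero_right (i : ℕ) : sdtw w i 0 = 0 := by rw [sdtw]

@[simp] lemma sdtw_zero_succ (j : ℕ) : sdtw w 0 (j + 1) = ⊤ := by rw [sdtw]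

lemma sdtw_succ_succ (i j : ℕ) :
    sdtw w (i + 1) (j + 1) =
      w (i + 1) (j + 1) + min (sdtw w (i + 1) j) (min (sdtw w i (j + 1)) (sdtw w i j)) := by
  rw [sdtw]

lemma biInf_Icc_succ_dtw_sub (i j : ℕ) :
    ⨅ s ∈ Icc 1 (i + 1), dtw (fun i' j' => w (s - 1 + i') j') (i + 1 - s) (j + 1) =
      ⨅ s ∈ Icc 1 i, dtw (fun i' j' => w (s - 1 + i') j') (i - s + 1) (j + 1) := by
  rw [← insert_Icc_right_eq_Icc_add_one (Nat.le_add_left 1 i), Finset.iInf_insert, Nat.sub_self,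
    dtw_zero_succ, top_inf_eq]
  refine biInf_congr fun s hs => ?_
  rw [Nat.sub_add_comm (mem_Icc.1 hs).2]

theorem sdtw_succ_eq_biInf_dtw : ∀ i j : ℕ, sdtw w i (j + 1) =
    ⨅ s ∈ Icc 1 i, dtw (fun i' j' => w (s - 1 + i') j') (i - s + 1) (j + 1)
  | 0, j => by simp
  | i + 1, 0 => by
    have first_row : sdtw w (i + 1) (0 + 1) = w (i + 1) 1 := by simp [sdtw_succ_succ]
    rw [first_row]
    refine le_antisymm (le_iInf₂ fun s hs => ?_) ?_
    · have h := coe_le_dtw_succ_succ (fun i' j' => w (s - 1 + i') j') (i + 1 - s) 0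
      rwa [show s - 1 + (i + 1 - s + 1) = i + 1 by grind] at h
    · refine iInf₂_le_of_le (i + 1) (by simp) ?_
      simp
  | i + 1, j + 1 => by
    have unfold_window : ∀ s ∈ Icc 1 (i + 1),
        dtw (fun i' j' => w (s - 1 + i') j') (i + 1 - s + 1) (j + 1 + 1) =
          w (i + 1) (j + 1 + 1) +
            min (dtw (fun i' j' => w (s - 1 + i') j') (i + 1 - s + 1) (j + 1))
              (min (dtw (fun i' j' => w (s - 1 + i') j') (i + 1 - s) (j + 1 + 1))
                (dtw (fun i' j' => w (s - 1 + i') j') (i + 1 - s) (j + 1))) := by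
      intro s hs
      rw [dtw_succ_succ, show s - 1 + (i + 1 - s + 1) = i + 1 by grind]
    rw [sdtw_succ_succ, biInf_congr unfold_window, ← ENNReal.add_iInf₂]
    simp only [iInf_inf_eq]
    rw [biInf_Icc_succ_dtw_sub, biInf_Icc_succ_dtw_sub, sdtw_succ_eq_biInf_dtw (i + 1) j,
      sdtw_succ_eq_biInf_dtw i (j + 1), sdtw_succ_eq_biInf_dtw i j]

end DTW

theorem sdtw_eq_min_subsequence_dtw_general (w : ℕ → ℕ → NNReal) (m n : ℕ)
    (hn : 1 ≤ n) :
    (⨅ i ∈ Finset.Icc 1 m, sdtw w i n) =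
      ⨅ is ∈ Finset.Icc 1 m, ⨅ ie ∈ Finset.Icc is m,
        dtw (fun i' j' => w (is - 1 + i') j') (ie - is + 1) n := by
  obtain ⟨n, rfl⟩ := Nat.exists_eq_add_of_le' hn
  simp only [sdtw_succ_eq_biInf_dtw]
  exact biInf_Icc_biInf_Icc_comm 1 m _

/-- Subsequential DTW computes the minimum over all subsequences `[i_s, i_e]` of
the long sequence of the ordinary DTW distance of the short sequence against
that subsequence (with shifted costs `w (i_s - 1 + i') j'`). -/
theorem sdtw_eq_min_subsequence_dtw (w : ℕ → ℕ → NNReal) (m n : ℕ)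
    (hm : 1 ≤ m) (hn : 1 ≤ n) :
    (⨅ i ∈ Finset.Icc 1 m, sdtw w i n) =
      ⨅ is ∈ Finset.Icc 1 m, ⨅ ie ∈ Finset.Icc is m,
        dtw (fun i' j' => w (is - 1 + i') j') (ie - is + 1) n :=
  sdtw_eq_min_subsequence_dtw_general w m n hn
end
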